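/- Let ν = (ν_{i,j})_{i∈{0,1,∞},j∈{0,1,2}} ∈ ℂ⁹, and let σ₁(ν) be obtained from ν by interchanging the (i=0)-column with the (i=1)-column. Define the nine points of ℙ²(ℂ): p₁(ν)=(1:ν_{1,0}:1), p₂(ν)=(1:ν_{1,1}:1), p₃(ν)=(1:ν_{1,2}:1), p₄(ν)=(0:−ν_{0,0}:1), p₅(ν)=(0:−ν_{0,1}:1), p₉(ν)=(0:−ν_{0,2}:1), p₆(ν)=(1:−ν_{∞,0}+1:0), p₇(ν)=(1:−ν_{∞,1}+1:0), p₈(ν)=(1:−ν_{∞,2}+1:0). Let g : ℙ² → ℙ² be the projective transformation g(x₀:x₁:x₂) = (x₂−x₀ : −x₁ : x₂). Then g(pᵢ(ν)) = p_{τ(i)}(σ₁(ν)) for every i ∈ {1,…,9}, where τ is the permutation (1 4)(2 5)(3 9); moreover g maps the line {x₀=0} onto {x₀=x₂}, maps {x₀=x₂} onto {x₀=0}, and maps {x₂=0} onto itself. -/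
import Mathlib


/-- The nine blow-up centers `p₁(ν), …, p₉(ν)` (in this order, so that `pt ν k`
is `p_{k+1}(ν)`), given by representative vectors in `ℂ³`. The index
`i : Fin 3` of `ν i j` stands for `i ∈ {0, 1, ∞}`, with `2` standing for `∞`. -/
def pt (ν : Fin 3 → Fin 3 → ℂ) : Fin 9 → (Fin 3 → ℂ) :=
  ![![1, ν 1 0, 1], ![1, ν 1 1, 1], ![1, ν 1 2, 1],
    ![0, -ν 0 0, 1], ![0, -ν 0 1, 1],
    ![1, -ν 2 0 + 1, 0], ![1, -ν 2 1 + 1, 0], ![1, -ν 2 2 + 1, 0],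
    ![0, -ν 0 2, 1]]

/-- The permutation `τ = (1 4)(2 5)(3 9)` of `{1,…,9}`, in `0`-based indexing. -/
def τperm : Fin 9 → Fin 9 := ![3, 4, 8, 0, 1, 5, 6, 7, 2]

/-- The linear map on `ℂ³` inducing the projective transformation
`g(x₀:x₁:x₂) = (x₂−x₀ : −x₁ : x₂)`. -/
def G (x : Fin 3 → ℂ) : Fin 3 → ℂ := ![x 2 - x 0, -x 1, x 2]


lemma sw2 : (Equiv.swap (0:Fin 3) 1) 2 = 2 := by decide

def Ginv (y : Fin 3 → ℂ) : Fin 3 → ℂ := ![y 2 - y 0, -y 1, y 2]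

lemma G_Ginv (y : Fin 3 → ℂ) : G (Ginv y) = y := by
  funext k; fin_cases k <;> simp [G, Ginv] <;> ring

lemma Ginv_G (x : Fin 3 → ℂ) : Ginv (G x) = x := by
  funext k; fin_cases k <;> simp [G, Ginv] <;> ring

theorem stmt_18 (ν : Fin 3 → Fin 3 → ℂ) :
    (∀ i : Fin 9, ∃ t : ℂ, t ≠ 0 ∧
      G (pt ν i) = t • pt (fun i j => ν (Equiv.swap 0 1 i) j) (τperm i)) ∧
    Function.Bijective G ∧
    G '' {x : Fin 3 → ℂ | x 0 = 0} = {y : Fin 3 → ℂ | y 0 = y 2} ∧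
    G '' {x : Fin 3 → ℂ | x 0 = x 2} = {y : Fin 3 → ℂ | y 0 = 0} ∧
    G '' {x : Fin 3 → ℂ | x 2 = 0} = {y : Fin 3 → ℂ | y 2 = 0} := by
  refine ⟨?_, ?_, ?_, ?_, ?_⟩
  · intro i
    fin_cases i
    · refine ⟨1, by norm_num, ?_⟩
      show G ![1, ν 1 0, 1] = (1:ℂ) • ![0, -ν ((Equiv.swap 0 1) 0) 0, 1]
      funext k; fin_cases k <;> simp [G, sw2] <;> ring_nf
    · refine ⟨1, by norm_num, ?_⟩
      show G ![1, ν 1 1, 1] = (1:ℂ) • ![0, -ν ((Equiv.swap 0 1) 0) 1, 1]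
      funext k; fin_cases k <;> simp [G, sw2] <;> ring_nf
    · refine ⟨1, by norm_num, ?_⟩
      show G ![1, ν 1 2, 1] = (1:ℂ) • ![0, -ν ((Equiv.swap 0 1) 0) 2, 1]
      funext k; fin_cases k <;> simp [G, sw2] <;> ring_nf
    · refine ⟨1, by norm_num, ?_⟩
      show G ![0, -ν 0 0, 1] = (1:ℂ) • ![1, ν ((Equiv.swap 0 1) 1) 0, 1]
      funext k; fin_cases k <;> simp [G, sw2] <;> ring_nf
    · refine ⟨1, by norm_num, ?_⟩
      show G ![0, -ν 0 1, 1] = (1:ℂ) • ![1, ν ((Equiv.swap 0 1) 1) 1, 1]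
      funext k; fin_cases k <;> simp [G, sw2] <;> ring_nf
    · refine ⟨(-1), by norm_num, ?_⟩
      show G ![1, -ν 2 0 + 1, 0] = ((-1):ℂ) • ![1, -ν ((Equiv.swap 0 1) 2) 0 + 1, 0]
      funext k; fin_cases k <;> simp [G, sw2] <;> ring_nf
    · refine ⟨(-1), by norm_num, ?_⟩
      show G ![1, -ν 2 1 + 1, 0] = ((-1):ℂ) • ![1, -ν ((Equiv.swap 0 1) 2) 1 + 1, 0]
      funext k; fin_cases k <;> simp [G, sw2] <;> ring_nf
    · refine ⟨(-1), by norm_num, ?_⟩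
      show G ![1, -ν 2 2 + 1, 0] = ((-1):ℂ) • ![1, -ν ((Equiv.swap 0 1) 2) 2 + 1, 0]
      funext k; fin_cases k <;> simp [G, sw2] <;> ring_nf
    · refine ⟨1, by norm_num, ?_⟩
      show G ![0, -ν 0 2, 1] = (1:ℂ) • ![1, ν ((Equiv.swap 0 1) 1) 2, 1]
      funext k; fin_cases k <;> simp [G, sw2] <;> ring_nf
  · exact Function.bijective_iff_has_inverse.mpr ⟨Ginv, Ginv_G, G_Ginv⟩
  · ext y
    constructor
    · rintro ⟨x, hx, rfl⟩; simp_all [G]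
    · intro h
      refine ⟨Ginv y, ?_, G_Ginv y⟩
      simp only [Ginv, Set.mem_setOf_eq] at h ⊢
      simp
      linear_combination -h
  · ext y
    constructor
    · rintro ⟨x, hx, rfl⟩; simp_all [G]
    · intro h
      refine ⟨Ginv y, ?_, G_Ginv y⟩
      simp only [Ginv, Set.mem_setOf_eq] at h ⊢
      simp
      linear_combination h
  · ext y
    constructor
    · rintro ⟨x, hx, rfl⟩; simp_all [G]
    · intro h
      refine ⟨Ginv y, ?_, G_Ginv y⟩
      simp only [Ginv, Set.mem_setOf_eq] at h ⊢
      simp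
      exact h
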